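/- arXiv:2002.05715 — 3 statements merged into one kernel-verified Lean document; each statement's English description precedes it below -/
import Mathlib

section
/- Let d_1,…,d_K > 0 with d_min = min_k d_k and d_max = max_k d_k, let z ∈ ℝ^K with ‖z‖² > Kε for some ε > 0, and define h(c) = (1/K) Σ_k (z_k · c/(c+d_k))² − ε for c > 0. Then h has a root c satisfying d_min·√(Kε)/(‖z‖−√(Kε)) ≤ c ≤ d_max·√(Kε)/(‖z‖−√(Kε)). -/
open Finset

theorem stmt1 (K : ℕ) (hK : 0 < K) (ε : ℝ) (hε : 0 < ε)
    (d z : Fin K → ℝ) (hd : ∀ k, 0 < d k)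
    (dmin dmax : ℝ)
    (hmin : IsLeast (Set.range d) dmin)
    (hmax : IsGreatest (Set.range d) dmax)
    (hz : ∑ k, z k ^ 2 > K * ε) :
    ∃ c : ℝ,
      dmin * Real.sqrt (K * ε) / (Real.sqrt (∑ k, z k ^ 2) - Real.sqrt (K * ε)) ≤ c ∧
      c ≤ dmax * Real.sqrt (K * ε) / (Real.sqrt (∑ k, z k ^ 2) - Real.sqrt (K * ε)) ∧
      (1 / K : ℝ) * ∑ k, (z k * (c / (c + d k))) ^ 2 - ε = 0 := by
  set s := Real.sqrt (K * ε) with hs_def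
  set N := Real.sqrt (∑ k, z k ^ 2) with hN_def
  have hKε : (0:ℝ) < K * ε := by positivity
  have hsum_pos : (0:ℝ) < ∑ k, z k ^ 2 := lt_trans hKε hz
  have hs_pos : 0 < s := Real.sqrt_pos.2 hKε
  have hsN : s < N := Real.sqrt_lt_sqrt hKε.le hz
  have hN_pos : 0 < N := lt_trans hs_pos hsN
  have hs2 : s ^ 2 = K * ε := Real.sq_sqrt hKε.le
  have hN2 : N ^ 2 = ∑ k, z k ^ 2 := Real.sq_sqrt hsum_pos.le
  have hNs : 0 < N - s := sub_pos.2 hsN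
  have hdmin_pos : 0 < dmin := by obtain ⟨k, hk⟩ := hmin.1; rw [← hk]; exact hd k
  have hdmax_pos : 0 < dmax := by obtain ⟨k, hk⟩ := hmax.1; rw [← hk]; exact hd k
  have hminmax : dmin ≤ dmax := hmax.2 hmin.1
  have hdk_min : ∀ k, dmin ≤ d k := fun k => hmin.2 ⟨k, rfl⟩
  have hdk_max : ∀ k, d k ≤ dmax := fun k => hmax.2 ⟨k, rfl⟩
  set a := dmin * s / (N - s) with ha_def
  set b := dmax * s / (N - s) with hb_def
  have ha_pos : 0 < a := by positivity
  have hb_pos : 0 < b := by positivity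
  have hab : a ≤ b := by
    rw [ha_def, hb_def]
    gcongr
  set f : ℝ → ℝ := fun c => (1 / K : ℝ) * ∑ k, (z k * (c / (c + d k))) ^ 2 - ε with hf_def
  -- continuity
  have hcont : ContinuousOn f (Set.Icc a b) := by
    apply ContinuousOn.sub _ continuousOn_const
    apply ContinuousOn.mul continuousOn_const
    apply continuousOn_finset_sum
    intro k _
    apply ContinuousOn.pow
    apply ContinuousOn.mul continuousOn_const
    apply ContinuousOn.div continuousOn_id (by fun_prop)
    intro x hx
    have : 0 < x := lt_of_lt_of_le ha_pos hx.1
    have := hd k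
    positivity
  -- f a ≤ 0
  have hratio_a : a / (a + dmin) = s / N := by
    rw [ha_def]
    field_simp
    ring
  have hfa : f a ≤ 0 := by
    have hsum_le : ∑ k, (z k * (a / (a + d k))) ^ 2 ≤ K * ε := by
      have hbound : ∀ k ∈ Finset.univ, (z k * (a / (a + d k))) ^ 2 ≤ z k ^ 2 * (s / N) ^ 2 := by
        intro k _
        have h1 : a / (a + d k) ≤ a / (a + dmin) := by
          apply div_le_div_of_nonneg_left ha_pos.le (by linarith [hd k])
          linarith [hdk_min k]
        have h2 : 0 ≤ a / (a + d k) := by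
          have := hd k; positivity
        rw [mul_pow]
        apply mul_le_mul_of_nonneg_left _ (sq_nonneg (z k))
        calc (a / (a + d k)) ^ 2 ≤ (a / (a + dmin)) ^ 2 := by
              apply pow_le_pow_left₀ h2 h1
          _ = (s / N) ^ 2 := by rw [hratio_a]
      calc ∑ k, (z k * (a / (a + d k))) ^ 2 ≤ ∑ k, z k ^ 2 * (s / N) ^ 2 :=
            Finset.sum_le_sum hbound
        _ = (∑ k, z k ^ 2) * (s / N) ^ 2 := by rw [← Finset.sum_mul]
        _ = K * ε := by
            rw [← hN2, div_pow, hs2]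
            field_simp
    have hK' : (0:ℝ) < K := by exact_mod_cast hK
    have : (1 / K : ℝ) * ∑ k, (z k * (a / (a + d k))) ^ 2 ≤ (1 / K : ℝ) * (K * ε) := by
      apply mul_le_mul_of_nonneg_left hsum_le (by positivity)
    simp only [hf_def]
    rw [sub_nonpos]
    calc (1 / K : ℝ) * ∑ k, (z k * (a / (a + d k))) ^ 2 ≤ (1 / K : ℝ) * (K * ε) := this
      _ = ε := by field_simp
  -- f b ≥ 0
  have hratio_b : b / (b + dmax) = s / N := by
    rw [hb_def]
    field_simp
    ring
  have hfb : 0 ≤ f b := by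
    have hsum_ge : K * ε ≤ ∑ k, (z k * (b / (b + d k))) ^ 2 := by
      have hbound : ∀ k ∈ Finset.univ, z k ^ 2 * (s / N) ^ 2 ≤ (z k * (b / (b + d k))) ^ 2 := by
        intro k _
        have h1 : b / (b + dmax) ≤ b / (b + d k) := by
          apply div_le_div_of_nonneg_left hb_pos.le (by linarith [hd k])
          linarith [hdk_max k]
        have h2 : 0 ≤ b / (b + dmax) := by positivity
        rw [mul_pow]
        apply mul_le_mul_of_nonneg_left _ (sq_nonneg (z k))
        calc (s / N) ^ 2 = (b / (b + dmax)) ^ 2 := by rw [hratio_b]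
          _ ≤ (b / (b + d k)) ^ 2 := pow_le_pow_left₀ h2 h1 2
      calc (K : ℝ) * ε = (∑ k, z k ^ 2) * (s / N) ^ 2 := by
            rw [← hN2, div_pow, hs2]; field_simp
        _ = ∑ k, z k ^ 2 * (s / N) ^ 2 := by rw [← Finset.sum_mul]
        _ ≤ ∑ k, (z k * (b / (b + d k))) ^ 2 := Finset.sum_le_sum hbound
    have hK' : (0:ℝ) < K := by exact_mod_cast hK
    simp only [hf_def]
    rw [sub_nonneg]
    calc ε = (1 / K : ℝ) * (K * ε) := by field_simp
      _ ≤ (1 / K : ℝ) * ∑ k, (z k * (b / (b + d k))) ^ 2 :=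
          mul_le_mul_of_nonneg_left hsum_ge (by positivity)
  -- IVT
  have h0 : (0:ℝ) ∈ Set.Icc (f a) (f b) := ⟨hfa, hfb⟩
  obtain ⟨c, hc_mem, hc_eq⟩ := intermediate_value_Icc hab hcont h0
  exact ⟨c, hc_mem.1, hc_mem.2, hc_eq⟩
end

section
/- Let D = diag(d_1,…,d_K) with d_k > 0, let d_min = min_k d_k, d_max = max_k d_k, κ = d_max/d_min ≥ 1. For a parameter α with d_min ≤ α ≤ d_max, a vector z with r := ‖z‖/√(Kε) > 1, and z' = D(α√(Kε)/(‖z‖−√(Kε)) · I + D)⁻¹ z, define r' = ‖z'‖/√(Kε). Then r/(κ/(r−1)+1) ≤ r' ≤ r/((1/κ)/(r−1)+1). -/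
open Finset

theorem stmt4 (K : ℕ) (hK : 0 < K) (ε : ℝ) (hε : 0 < ε)
    (d : Fin K → ℝ) (hd : ∀ k, 0 < d k)
    (dmin dmax : ℝ)
    (hmin : IsLeast (Set.range d) dmin)
    (hmax : IsGreatest (Set.range d) dmax)
    (κ : ℝ) (hκ : κ = dmax / dmin)
    (α : ℝ) (hα₁ : dmin ≤ α) (hα₂ : α ≤ dmax)
    (z : Fin K → ℝ)
    (r : ℝ) (hr : r = Real.sqrt (∑ i, z i ^ 2) / Real.sqrt (K * ε)) (hr1 : 1 < r)
    (z' : Fin K → ℝ)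
    (hz' : ∀ k, z' k = d k / (α * Real.sqrt (K * ε) /
        (Real.sqrt (∑ i, z i ^ 2) - Real.sqrt (K * ε)) + d k) * z k)
    (r' : ℝ) (hr' : r' = Real.sqrt (∑ i, z' i ^ 2) / Real.sqrt (K * ε)) :
    r / (κ / (r - 1) + 1) ≤ r' ∧ r' ≤ r / ((1 / κ) / (r - 1) + 1) := by
  set s := Real.sqrt (K * ε) with hsdef
  have hs : 0 < s := Real.sqrt_pos.mpr (by positivity)
  set n := Real.sqrt (∑ i, z i ^ 2) with hndef
  have hN2 : 0 ≤ ∑ i, z i ^ 2 := by positivity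
  have hn0 : 0 ≤ n := Real.sqrt_nonneg _
  have hn : n = r * s := by rw [hr]; field_simp
  have hdmin : 0 < dmin := by
    obtain ⟨k, hk⟩ := hmin.1
    exact hk ▸ hd k
  have hdmax : 0 < dmax := lt_of_lt_of_le hdmin (le_trans hα₁ hα₂)
  have hdl : ∀ k, dmin ≤ d k := fun k => hmin.2 ⟨k, rfl⟩
  have hdu : ∀ k, d k ≤ dmax := fun k => hmax.2 ⟨k, rfl⟩
  have hα : 0 < α := lt_of_lt_of_le hdmin hα₁
  have hr0 : 0 < r - 1 := by linarith
  have hns : 0 < n - s := by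
    rw [hn]; nlinarith
  set β := α * s / (n - s) with hβdef
  have hβ : 0 < β := div_pos (mul_pos hα hs) hns
  have hβ' : β = α / (r - 1) := by
    rw [hβdef, hn]
    rw [show r * s - s = (r - 1) * s by ring]
    rw [div_eq_div_iff (by positivity) (by positivity)]
    ring
  set clo := dmin / (β + dmin) with hclodef
  set chi := dmax / (β + dmax) with hchidef
  have hclo0 : 0 ≤ clo := by positivity
  have hchi0 : 0 ≤ chi := by positivity
  have hck : ∀ k, clo ≤ d k / (β + d k) ∧ d k / (β + d k) ≤ chi := by
    intro k
    have h1 := hdl k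
    have h2 := hdu k
    have hk := hd k
    constructor
    · rw [hclodef, div_le_div_iff₀ (by positivity) (by positivity)]
      nlinarith
    · rw [hchidef, div_le_div_iff₀ (by positivity) (by positivity)]
      nlinarith
  have hzsq : ∀ k, clo ^ 2 * z k ^ 2 ≤ z' k ^ 2 ∧ z' k ^ 2 ≤ chi ^ 2 * z k ^ 2 := by
    intro k
    have h := hck k
    have hz'k : z' k = d k / (β + d k) * z k := by rw [hz' k]
    have hc0 : 0 ≤ d k / (β + d k) := div_nonneg (hd k).le (add_pos hβ (hd k)).le
    constructor
    · rw [hz'k, mul_pow]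
      exact mul_le_mul_of_nonneg_right (pow_le_pow_left₀ hclo0 h.1 2) (sq_nonneg _)
    · rw [hz'k, mul_pow]
      exact mul_le_mul_of_nonneg_right (pow_le_pow_left₀ hc0 h.2 2) (sq_nonneg _)
  have hsumlo : clo ^ 2 * ∑ i, z i ^ 2 ≤ ∑ i, z' i ^ 2 := by
    rw [Finset.mul_sum]
    exact Finset.sum_le_sum fun i _ => (hzsq i).1
  have hsumhi : ∑ i, z' i ^ 2 ≤ chi ^ 2 * ∑ i, z i ^ 2 := by
    rw [Finset.mul_sum]
    exact Finset.sum_le_sum fun i _ => (hzsq i).2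
  have hsqlo : clo * n ≤ Real.sqrt (∑ i, z' i ^ 2) := by
    have := Real.sqrt_le_sqrt hsumlo
    rwa [Real.sqrt_mul (sq_nonneg _), Real.sqrt_sq hclo0] at this
  have hsqhi : Real.sqrt (∑ i, z' i ^ 2) ≤ chi * n := by
    have := Real.sqrt_le_sqrt hsumhi
    rwa [Real.sqrt_mul (sq_nonneg _), Real.sqrt_sq hchi0] at this
  have hrlo : clo * r ≤ r' := by
    rw [hr', show clo * r = clo * n / s from by rw [hn]; field_simp]
    gcongr
  have hrhi : r' ≤ chi * r := by
    rw [hr', show chi * r = chi * n / s from by rw [hn]; field_simp]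
    gcongr
  have hrpos : 0 < r := by linarith
  constructor
  · have hA : 0 < α / (r - 1) + dmin := by positivity
    have hD : 0 < dmax / dmin / (r - 1) + 1 := by positivity
    have hkey : 1 / (dmax / dmin / (r - 1) + 1) ≤ dmin / (α / (r - 1) + dmin) := by
      rw [div_le_div_iff₀ hD hA]
      have he : dmin * (dmax / dmin / (r - 1) + 1) = dmax / (r - 1) + dmin := by
        field_simp
      have h2 : α / (r - 1) ≤ dmax / (r - 1) := by gcongr
      rw [he]; linarith
    refine le_trans ?_ hrlo
    rw [hκ]
    calc r / (dmax / dmin / (r - 1) + 1) = r * (1 / (dmax / dmin / (r - 1) + 1)) := by ring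
      _ ≤ r * (dmin / (α / (r - 1) + dmin)) :=
          mul_le_mul_of_nonneg_left hkey hrpos.le
      _ = clo * r := by rw [hclodef, hβ']; ring
  · have hA : 0 < α / (r - 1) + dmax := by positivity
    have hD : 0 < 1 / (dmax / dmin) / (r - 1) + 1 := by positivity
    have hkey : dmax / (α / (r - 1) + dmax) ≤ 1 / (1 / (dmax / dmin) / (r - 1) + 1) := by
      rw [div_le_div_iff₀ hA hD]
      have he : dmax * (1 / (dmax / dmin) / (r - 1) + 1) = dmin / (r - 1) + dmax := by
        field_simp
      have h2 : dmin / (r - 1) ≤ α / (r - 1) := by gcongr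
      rw [he]; linarith
    refine le_trans hrhi ?_
    rw [hκ]
    calc chi * r = r * (dmax / (α / (r - 1) + dmax)) := by rw [hchidef, hβ']; ring
      _ ≤ r * (1 / (1 / (dmax / dmin) / (r - 1) + 1)) :=
          mul_le_mul_of_nonneg_left hkey hrpos.le
      _ = r / (1 / (dmax / dmin) / (r - 1) + 1) := by ring
end

section
/- Let d_k > 0 and c_i > 0 for all i. The quantity Π_{i=0}^t (d_k + c_i)/d_k^{t+1} is strictly increasing in t, and consequently d_k† = c_0/(Π_{i=0}^t (d_k+c_i)/d_k^{t+1} − 1) is strictly decreasing in t. Hence the trace Σ_k d_k† of the equivalent kernel's Gram matrix decreases with each round of self-distillation. -/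
open Finset

private lemma f_gt_one (d : ℝ) (hd : 0 < d) (c : ℕ → ℝ) (hc : ∀ i, 0 < c i) (t : ℕ) :
    1 < (∏ i ∈ Finset.range (t + 1), (d + c i)) / d ^ (t + 1) := by
  rw [lt_div_iff₀ (by positivity), one_mul]
  induction t with
  | zero => simpa using by linarith [hc 0]
  | succ n ih =>
      rw [Finset.prod_range_succ, pow_succ]
      have h1 : 0 < d ^ (n+1) := by positivity
      have h2 : d ^ (n+1) * d < (∏ i ∈ Finset.range (n + 1), (d + c i)) * (d + c (n+1)) := by
        apply mul_lt_mul' (le_of_lt ih) (by linarith [hc (n+1)]) (le_of_lt hd)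
        calc (0:ℝ) < d ^ (n+1) := h1
          _ < _ := ih
      linarith
  
private lemma f_mono (d : ℝ) (hd : 0 < d) (c : ℕ → ℝ) (hc : ∀ i, 0 < c i) :
    StrictMono (fun t : ℕ => (∏ i ∈ Finset.range (t + 1), (d + c i)) / d ^ (t + 1)) := by
  apply strictMono_nat_of_lt_succ
  intro n
  nth_rewrite 2 [Finset.prod_range_succ]
  nth_rewrite 2 [pow_succ]
  rw [div_lt_div_iff₀ (by positivity) (by positivity)]
  have hp : 0 < ∏ i ∈ Finset.range (n + 1), (d + c i) := by
    apply Finset.prod_pos; intro i _; linarith [hc i]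
  have : d < d + c (n+1) := by linarith [hc (n+1)]
  nlinarith [mul_pos hp (pow_pos hd (n+1))]

private lemma g_anti (d : ℝ) (hd : 0 < d) (c : ℕ → ℝ) (hc : ∀ i, 0 < c i) :
    StrictAnti (fun t : ℕ =>
      c 0 / ((∏ i ∈ Finset.range (t + 1), (d + c i)) / d ^ (t + 1) - 1)) := by
  intro a b hab
  simp only
  apply div_lt_div_of_pos_left (hc 0)
  · linarith [f_gt_one d hd c hc a]
  · linarith [f_mono d hd c hc hab]

theorem stmt13 (d : ℝ) (hd : 0 < d) (c : ℕ → ℝ) (hc : ∀ i, 0 < c i)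
    (K : ℕ) (hK : 0 < K) (dv : Fin K → ℝ) (hdv : ∀ k, 0 < dv k) :
    StrictMono (fun t : ℕ => (∏ i ∈ Finset.range (t + 1), (d + c i)) / d ^ (t + 1)) ∧
    StrictAnti (fun t : ℕ =>
      c 0 / ((∏ i ∈ Finset.range (t + 1), (d + c i)) / d ^ (t + 1) - 1)) ∧
    StrictAnti (fun t : ℕ =>
      ∑ k, c 0 / ((∏ i ∈ Finset.range (t + 1), (dv k + c i)) / (dv k) ^ (t + 1) - 1)) := by
  refine ⟨f_mono d hd c hc, g_anti d hd c hc, ?_⟩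
  intro a b hab
  apply Finset.sum_lt_sum_of_nonempty
  · exact Finset.univ_nonempty_iff.mpr (Fin.pos_iff_nonempty.mp hK)
  · intro k _
    exact g_anti (dv k) (hdv k) c hc hab
end
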